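/- The number of ascent sequences of length n avoiding the pattern 102 is (3^{n−1} + 1)/2 for n ≥ 1 (equivalently, twice the count is 3^{n−1} + 1). -/

import Mathlib

/-!
A 102-avoiding ascent sequence `s` can be extended by `v` exactly when `v ≤ maxAppendable s`,
the least of `max s + 1` and the values `s j + 1` at positions `j` lying below some earlier
entry. The point is that the values of such a sequence form an initial segment of `ℕ`, so
`s j + 1` already occurs before `j` and a larger appended value would complete a `102`.
Appending `v < maxAppendable s` gives the bound `v + 1`; appending `maxAppendable s` keeps
the bound, or raises it by one when `s` is weakly increasing.

Hence `P n = boundPoly n = ∑ X ^ maxAppendable s` over the sequences of length `n + 1`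
satisfies a linear recursion, in which the weakly increasing sequences contribute `X (X + 1)ⁿ`. Solving it,
`(X - 2) P n - (X - 1)² (X + 1)ⁿ + 3ⁿ (X - 1)` is `(X - 2) c` for a constant `c`. Evaluating
at `X = 1` shows that `c` is the number of sequences, and evaluating at `X = 0`, where `P n`
vanishes, gives `2 c = 3ⁿ + 1`.
-/

open Filter Topology

/-- Number of ascents in a sequence (list) of naturals. -/
def asc (s : List ℕ) : ℕ :=
  ((s.zip s.tail).filter (fun p => p.1 < p.2)).length

/-- `s` is an ascent sequence: first entry `0`, and each later entry is at most
one more than the number of ascents of the preceding prefix. -/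
def IsAscentSeq (s : List ℕ) : Prop :=
  (0 < s.length → s.getD 0 0 = 0) ∧
  ∀ i, 0 < i → i < s.length → s.getD i 0 ≤ asc (s.take i) + 1

/-- `s` is a weak ascent sequence: every entry is at most the number of ascents. -/
def IsWeakAscentSeq (s : List ℕ) : Prop :=
  ∀ x ∈ s, x ≤ asc s

/-- `s` contains the pattern `p`: some subsequence of `s` is order-isomorphic
(including equalities) to `p`. -/
def ContainsPattern (s p : List ℕ) : Prop :=
  ∃ idx : Fin p.length → ℕ, StrictMono idx ∧ (∀ a, idx a < s.length) ∧
    ∀ a b : Fin p.length, p.get a < p.get b ↔ s.getD (idx a) 0 < s.getD (idx b) 0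

def AvoidsPattern (s p : List ℕ) : Prop := ¬ ContainsPattern s p

/-- A pattern of length `j` is a permutation of `0,…,j-1`. -/
def IsPattern (p : List ℕ) : Prop := List.Perm p (List.range p.length)

/-- Sum-indecomposable: no proper prefix whose entries are all smaller than
all entries of the complementary suffix. -/
def SumIndecomposable (p : List ℕ) : Prop :=
  ¬ ∃ i, 0 < i ∧ i < p.length ∧ ∀ x ∈ p.take i, ∀ y ∈ p.drop i, x < y

/-- Number of `p`-avoiding ascent sequences of length `k`. -/
noncomputable def ascentAvoidCount (p : List ℕ) (k : ℕ) : ℕ :=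
  {s : List ℕ | s.length = k ∧ IsAscentSeq s ∧ AvoidsPattern s p}.ncard

/-- Number of `p`-avoiding weak ascent sequences of length `k`. -/
noncomputable def weakAvoidCount (p : List ℕ) (k : ℕ) : ℕ :=
  {s : List ℕ | s.length = k ∧ IsWeakAscentSeq s ∧ AvoidsPattern s p}.ncard

def listMax (s : List ℕ) : ℕ := s.foldr max 0
def listMin (s : List ℕ) : ℕ := s.foldr min (listMax s)

/-- Reverse-complement map: `m j = max + min - n (k+1-j)`. -/
def revComp (s : List ℕ) : List ℕ :=
  s.reverse.map (fun x => listMax s + listMin s - x)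

/-- Occurrence of pattern 000: three equal entries. -/
def Contains000 (s : List ℕ) : Prop :=
  ∃ a b c, a < b ∧ b < c ∧ c < s.length ∧
    s.getD a 0 = s.getD b 0 ∧ s.getD b 0 = s.getD c 0

/-- Occurrence of pattern 100: `n i₁ > n i₂ = n i₃`. -/
def Contains100 (s : List ℕ) : Prop :=
  ∃ a b c, a < b ∧ b < c ∧ c < s.length ∧
    s.getD b 0 < s.getD a 0 ∧ s.getD b 0 = s.getD c 0

/-- Occurrence of pattern 110: `n i₁ = n i₂ > n i₃`. -/
def Contains110 (s : List ℕ) : Prop :=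
  ∃ a b c, a < b ∧ b < c ∧ c < s.length ∧
    s.getD a 0 = s.getD b 0 ∧ s.getD c 0 < s.getD b 0

/-- Occurrence of pattern 120: `n i₂ > n i₁ > n i₃`. -/
def Contains120 (s : List ℕ) : Prop :=
  ∃ a b c, a < b ∧ b < c ∧ c < s.length ∧
    s.getD a 0 < s.getD b 0 ∧ s.getD c 0 < s.getD a 0

/-- Occurrence of pattern 201: `n i₁ > n i₃ > n i₂`. -/
def Contains201 (s : List ℕ) : Prop :=
  ∃ a b c, a < b ∧ b < c ∧ c < s.length ∧
    s.getD c 0 < s.getD a 0 ∧ s.getD b 0 < s.getD c 0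

/-- Occurrence of pattern 012: `n i₁ < n i₂ < n i₃`. -/
def Contains012 (s : List ℕ) : Prop :=
  ∃ a b c, a < b ∧ b < c ∧ c < s.length ∧
    s.getD a 0 < s.getD b 0 ∧ s.getD b 0 < s.getD c 0

/-- Occurrence of pattern 011: `n i₁ < n i₂ = n i₃`. -/
def Contains011 (s : List ℕ) : Prop :=
  ∃ a b c, a < b ∧ b < c ∧ c < s.length ∧
    s.getD a 0 < s.getD b 0 ∧ s.getD b 0 = s.getD c 0

/-- Occurrence of pattern 021: `n i₁ < n i₃ < n i₂`. -/
def Contains021 (s : List ℕ) : Prop :=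
  ∃ a b c, a < b ∧ b < c ∧ c < s.length ∧
    s.getD a 0 < s.getD c 0 ∧ s.getD c 0 < s.getD b 0

/-- Occurrence of pattern 102: `n i₂ < n i₁ < n i₃`. -/
def Contains102 (s : List ℕ) : Prop :=
  ∃ a b c, a < b ∧ b < c ∧ c < s.length ∧
    s.getD b 0 < s.getD a 0 ∧ s.getD a 0 < s.getD c 0

/-- The construction `C = 0101⋯01 W̃₁⋯W̃ₖ` from weak ascent sequences. -/
def buildC (k : ℕ) (W : Fin k → List ℕ) : List ℕ :=
  (List.replicate k ([0,1] : List ℕ)).flatten ++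
    (List.ofFn (fun h : Fin k =>
      (W h).map (fun x =>
        x + 1 + ∑ j ∈ Finset.univ.filter (fun j => j < h), listMax (W j)))).flatten

lemma asc_cons_cons (a b : ℕ) (l : List ℕ) :
    asc (a :: b :: l) = (if a < b then 1 else 0) + asc (b :: l) := by
  simp only [asc, List.tail_cons, List.zip_cons_cons, List.filter_cons]
  split_ifs <;> simp_all [Nat.add_comm]

lemma asc_le_asc_append (l t : List ℕ) : asc l ≤ asc (l ++ t) := by
  induction l with
  | nil => exact Nat.zero_le _
  | cons a l ih =>
    cases l with
    | nil => exact Nat.zero_le _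
    | cons b l =>
      rw [List.cons_append, List.cons_append, asc_cons_cons, asc_cons_cons]
      exact Nat.add_le_add_left ih _

lemma asc_take_le (s : List ℕ) (i : ℕ) : asc (s.take i) ≤ asc s := by
  simpa using asc_le_asc_append (s.take i) (s.drop i)

lemma asc_append_pair (l : List ℕ) (a b : ℕ) :
    asc (l ++ [a, b]) = asc (l ++ [a]) + if a < b then 1 else 0 := by
  induction l with
  | nil =>
    rw [List.nil_append, List.nil_append, asc_cons_cons, show asc [a] = 0 from rfl,
      show asc [b] = 0 from rfl, Nat.add_comm]
  | cons c l ih =>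
    cases l with
    | nil => simp only [List.nil_append, List.cons_append, asc_cons_cons] at ih ⊢; omega
    | cons d l => simp only [List.cons_append, asc_cons_cons] at ih ⊢; omega

lemma listMax_le_iff {s : List ℕ} {m : ℕ} : listMax s ≤ m ↔ ∀ x ∈ s, x ≤ m := by
  induction s with
  | nil => simp [listMax]
  | cons a s ih => simp [listMax, ← ih]

lemma le_listMax_of_mem {s : List ℕ} {x : ℕ} (h : x ∈ s) : x ≤ listMax s :=
  listMax_le_iff.1 le_rfl x h

lemma listMax_mem {s : List ℕ} (hs : s ≠ []) : listMax s ∈ s := by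
  induction s with
  | nil => exact absurd rfl hs
  | cons a s ih =>
    rcases eq_or_ne s [] with rfl | hs'
    · simp [listMax]
    · change max a (listMax s) ∈ a :: s
      rcases max_choice a (listMax s) with h | h <;> rw [h]
      · exact List.mem_cons_self
      · exact List.mem_cons_of_mem a (ih hs')

lemma exists_getD_eq_listMax {s : List ℕ} (hs : s ≠ []) :
    ∃ k < s.length, s.getD k 0 = listMax s := by
  obtain ⟨k, hk, hke⟩ := List.mem_iff_getElem.1 (listMax_mem hs)
  exact ⟨k, hk, by rw [List.getD_eq_getElem _ _ hk, hke]⟩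

lemma listMax_append_singleton (s : List ℕ) (v : ℕ) :
    listMax (s ++ [v]) = max (listMax s) v := by
  refine eq_of_forall_ge_iff fun m => ?_
  simp [listMax_le_iff, or_imp, forall_and]

lemma getD_append_singleton_self (s : List ℕ) (v : ℕ) : (s ++ [v]).getD s.length 0 = v := by
  simp

lemma getD_take {s : List ℕ} {p q : ℕ} (hq : q < p) : (s.take p).getD q 0 = s.getD q 0 := by
  simp [List.getD_eq_getElem?_getD, hq]

lemma getD_le_listMax (s : List ℕ) (i : ℕ) : s.getD i 0 ≤ listMax s := by
  rcases lt_or_ge i s.length with hi | hi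
  · rw [List.getD_eq_getElem _ _ hi]
    exact le_listMax_of_mem (List.getElem_mem hi)
  · rw [List.getD_eq_default _ _ hi]; exact Nat.zero_le _

def IsInversion (s : List ℕ) (i j : ℕ) : Prop :=
  i < j ∧ j < s.length ∧ s.getD j 0 < s.getD i 0

lemma pairwise_le_iff_forall_not_isInversion {s : List ℕ} :
    s.Pairwise (· ≤ ·) ↔ ∀ i j, ¬ IsInversion s i j := by
  simp only [List.pairwise_iff_getElem, IsInversion, not_and, not_lt]
  constructor
  · intro h i j hij hj
    rw [List.getD_eq_getElem _ _ hj, List.getD_eq_getElem _ _ (hij.trans hj)]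
    exact h i j _ hj hij
  · intro h i j hi hj hij
    have := h i j hij hj
    rwa [List.getD_eq_getElem _ _ hj, List.getD_eq_getElem _ _ hi] at this

lemma exists_isInversion {s : List ℕ} (h : ¬ s.Pairwise (· ≤ ·)) : ∃ i j, IsInversion s i j := by
  simpa [pairwise_le_iff_forall_not_isInversion] using h

lemma isInversion_append_singleton_iff {s : List ℕ} {v i j : ℕ} :
    IsInversion (s ++ [v]) i j ↔
      IsInversion s i j ∨ (j = s.length ∧ i < s.length ∧ v < s.getD i 0) := by
  simp only [IsInversion, List.length_append, List.length_singleton]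
  constructor
  · rintro ⟨hij, hj, hlt⟩
    rcases (Nat.lt_succ_iff.1 hj).lt_or_eq with hj | rfl
    · rw [List.getD_append _ _ _ _ hj, List.getD_append _ _ _ _ (hij.trans hj)] at hlt
      exact Or.inl ⟨hij, hj, hlt⟩
    · rw [getD_append_singleton_self, List.getD_append _ _ _ _ hij] at hlt
      exact Or.inr ⟨rfl, hij, hlt⟩
  · rintro (⟨hij, hj, hlt⟩ | ⟨rfl, hi, hlt⟩)
    · rw [List.getD_append _ _ _ _ hj, List.getD_append _ _ _ _ (hij.trans hj)]
      exact ⟨hij, by omega, hlt⟩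
    · rw [getD_append_singleton_self, List.getD_append _ _ _ _ hi]
      exact ⟨hi, by omega, hlt⟩

lemma pairwise_append_singleton_iff {s : List ℕ} {v : ℕ} :
    (s ++ [v]).Pairwise (· ≤ ·) ↔ s.Pairwise (· ≤ ·) ∧ listMax s ≤ v := by
  simp [List.pairwise_append, listMax_le_iff]

lemma asc_add_le_listMax_of_pairwise {a : ℕ} {l : List ℕ} (h : (a :: l).Pairwise (· ≤ ·)) :
    asc (a :: l) + a ≤ listMax (a :: l) := by
  induction l generalizing a with
  | nil => simp [asc, listMax]
  | cons b l ih =>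
    have hab : a ≤ b := List.rel_of_pairwise_cons h List.mem_cons_self
    have hb := ih h.of_cons
    have hmax : listMax (b :: l) ≤ listMax (a :: b :: l) := le_max_right a _
    rw [asc_cons_cons]
    split_ifs <;> omega

lemma isAscentSeq_append_singleton_iff {s : List ℕ} (hs : s ≠ []) (v : ℕ) :
    IsAscentSeq (s ++ [v]) ↔ IsAscentSeq s ∧ v ≤ asc s + 1 := by
  have hlen : 0 < s.length := List.length_pos_iff.2 hs
  constructor
  · rintro ⟨h0, h1⟩
    refine ⟨⟨fun _ => ?_, fun i hi hi' => ?_⟩, ?_⟩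
    · have := h0 (by simp)
      rwa [List.getD_append _ _ _ _ hlen] at this
    · have := h1 i hi (by simp; omega)
      rwa [List.getD_append _ _ _ _ hi', List.take_append_of_le_length hi'.le] at this
    · simpa [List.take_append_of_le_length] using h1 s.length hlen (by simp)
  · rintro ⟨⟨h0, h1⟩, hv⟩
    refine ⟨fun _ => by rw [List.getD_append _ _ _ _ hlen]; exact h0 hlen, fun i hi hi' => ?_⟩
    simp only [List.length_append, List.length_singleton] at hi'
    rcases (Nat.lt_succ_iff.1 hi').lt_or_eq with h | rfl
    · rw [List.getD_append _ _ _ _ h, List.take_append_of_le_length h.le]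
      exact h1 i hi h
    · simpa [List.take_append_of_le_length] using hv

lemma IsAscentSeq.take {s : List ℕ} (h : IsAscentSeq s) (p : ℕ) : IsAscentSeq (s.take p) := by
  refine ⟨fun hp => ?_, fun i hi hip => ?_⟩
  · rw [getD_take (by simp at hp; omega)]
    exact h.1 (by simp at hp; omega)
  · simp only [List.length_take, lt_min_iff] at hip
    rw [getD_take hip.1, List.take_take, min_eq_left hip.1.le]
    exact h.2 i hi hip.2

lemma IsAscentSeq.listMax_le {s : List ℕ} (h : IsAscentSeq s) : listMax s ≤ asc s + 1 := by
  refine listMax_le_iff.2 fun x hx => ?_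
  obtain ⟨i, hi, rfl⟩ := List.mem_iff_getElem.1 hx
  rw [← List.getD_eq_getElem _ 0 hi]
  rcases Nat.eq_zero_or_pos i with rfl | hi0
  · rw [h.1 hi]; omega
  · exact (h.2 i hi0 hi).trans (by have := asc_take_le s i; omega)

lemma IsAscentSeq.asc_eq_listMax {s : List ℕ} (h : IsAscentSeq s) (hs : s.Pairwise (· ≤ ·)) :
    asc s = listMax s := by
  refine le_antisymm ?_ ?_
  · rcases s with _ | ⟨a, l⟩
    · rfl
    · have := asc_add_le_listMax_of_pairwise hs
      omega
  · induction s using List.reverseRecOn with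
    | nil => rfl
    | append_singleton l v ih =>
      rcases l.eq_nil_or_concat' with rfl | ⟨l, a, rfl⟩
      · have : v = 0 := by simpa using h.1 (by simp)
        simp [this, listMax]
      · have hl : l ++ [a] ≠ [] := by simp
        obtain ⟨hasc, hv⟩ := (isAscentSeq_append_singleton_iff hl v).1 h
        obtain ⟨hsorted, hmax⟩ := pairwise_append_singleton_iff.1 hs
        have hih := ih hasc hsorted
        have ha : a ≤ listMax (l ++ [a]) := le_listMax_of_mem (by simp)
        rw [listMax_append_singleton, List.append_assoc, List.singleton_append,
          asc_append_pair]
        split_ifs <;> omega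

lemma contains102_append_singleton_iff {s : List ℕ} {v : ℕ} :
    Contains102 (s ++ [v]) ↔ Contains102 s ∨ ∃ i j, IsInversion s i j ∧ s.getD i 0 < v := by
  constructor
  · rintro ⟨a, b, c, hab, hbc, hc, h1, h2⟩
    simp only [List.length_append, List.length_singleton] at hc
    rw [List.getD_append _ _ _ _ (by omega), List.getD_append _ _ _ _ (by omega)] at h1
    rw [List.getD_append _ _ _ _ (by omega)] at h2
    rcases (Nat.lt_succ_iff.1 hc).lt_or_eq with hc | rfl
    · rw [List.getD_append _ _ _ _ hc] at h2
      exact Or.inl ⟨a, b, c, hab, hbc, hc, h1, h2⟩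
    · rw [getD_append_singleton_self] at h2
      exact Or.inr ⟨a, b, ⟨hab, hbc, h1⟩, h2⟩
  · rintro (⟨a, b, c, hab, hbc, hc, h1, h2⟩ | ⟨a, b, ⟨hab, hb, h1⟩, h2⟩)
    · refine ⟨a, b, c, hab, hbc, by simp; omega, ?_⟩
      simp only [List.getD_append _ _ _ _ hc, List.getD_append _ _ _ _ (hbc.trans hc),
        List.getD_append _ _ _ _ ((hab.trans hbc).trans hc)]
      exact ⟨h1, h2⟩
    · refine ⟨a, b, s.length, hab, hb, by simp, ?_⟩
      rw [List.getD_append _ _ _ _ hb, List.getD_append _ _ _ _ (hab.trans hb),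
        getD_append_singleton_self]
      exact ⟨h1, h2⟩

lemma Contains102.of_take {s : List ℕ} {p : ℕ} (h : Contains102 (s.take p)) : Contains102 s := by
  obtain ⟨a, b, c, hab, hbc, hc, h1, h2⟩ := h
  simp only [List.length_take, lt_min_iff] at hc
  rw [getD_take (hab.trans (hbc.trans hc.1)), getD_take (hbc.trans hc.1)] at h1
  rw [getD_take (hab.trans (hbc.trans hc.1)), getD_take hc.1] at h2
  exact ⟨a, b, c, hab, hbc, hc.2, h1, h2⟩

def IsAscentSeq102Free (s : List ℕ) : Prop := IsAscentSeq s ∧ ¬ Contains102 s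

namespace IsAscentSeq102Free

variable {s : List ℕ}

lemma take (h : IsAscentSeq102Free s) (p : ℕ) : IsAscentSeq102Free (s.take p) :=
  ⟨h.1.take p, fun hc => h.2 hc.of_take⟩

lemma of_append {t : List ℕ} (h : IsAscentSeq102Free (s ++ t)) : IsAscentSeq102Free s := by
  simpa using h.take s.length

lemma le_listMax_add_one_of_append (hs : s ≠ []) {v : ℕ} (h : IsAscentSeq102Free (s ++ [v])) :
    v ≤ listMax s + 1 := by
  obtain ⟨hasc, hv⟩ := (isAscentSeq_append_singleton_iff hs v).1 h.1
  by_cases hsorted : s.Pairwise (· ≤ ·)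
  · rwa [← hasc.asc_eq_listMax hsorted]
  · obtain ⟨i, j, hij⟩ := exists_isInversion hsorted
    have hi := getD_le_listMax s i
    by_contra hlt
    exact h.2 (contains102_append_singleton_iff.2 (Or.inr ⟨i, j, hij, by omega⟩))

lemma mem_of_le_listMax (h : IsAscentSeq102Free s) (hs : s ≠ []) {x : ℕ}
    (hx : x ≤ listMax s) : x ∈ s := by
  induction s using List.reverseRecOn with
  | nil => exact absurd rfl hs
  | append_singleton l v ih =>
    rcases eq_or_ne l [] with rfl | hl
    · have : v = 0 := by simpa using h.1.1 (by simp)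
      simp_all [listMax]
    · have hv := h.le_listMax_add_one_of_append hl
      rw [listMax_append_singleton] at hx
      by_cases hxl : x ≤ listMax l
      · exact List.mem_append_left _ (ih h.of_append hl hxl)
      · rw [show x = v by omega]
        exact List.mem_append_right _ (List.mem_singleton_self v)

lemma exists_getD_eq_succ_of_isInversion (h : IsAscentSeq102Free s) {i j : ℕ}
    (hij : IsInversion s i j) : ∃ k < j, s.getD k 0 = s.getD j 0 + 1 := by
  obtain ⟨hij, hj, hlt⟩ := hij
  have hne : s.take j ≠ [] := List.ne_nil_of_length_pos (by simp; omega)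
  have hmax : s.getD j 0 + 1 ≤ listMax (s.take j) :=
    hlt.trans_le (getD_take hij ▸ getD_le_listMax _ i)
  obtain ⟨k, hk, hke⟩ := List.mem_iff_getElem.1 ((h.take j).mem_of_le_listMax hne hmax)
  have hkj : k < j := by simp at hk; omega
  rw [← List.getD_eq_getElem _ 0 hk, getD_take hkj] at hke
  exact ⟨k, hkj, hke⟩

end IsAscentSeq102Free

/-- The largest value that can be appended to a 102-avoiding ascent sequence `s`
(see `IsAscentSeq102Free.append_singleton_iff`). -/
def maxAppendable (s : List ℕ) : ℕ :=
  (insert (listMax s + 1)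
    (((Finset.range s.length).filter fun j => ∃ i < j, s.getD j 0 < s.getD i 0).image
      fun j => s.getD j 0 + 1)).min' (Finset.insert_nonempty _ _)

lemma le_maxAppendable_iff {s : List ℕ} {w : ℕ} :
    w ≤ maxAppendable s ↔
      w ≤ listMax s + 1 ∧ ∀ i j, IsInversion s i j → w ≤ s.getD j 0 + 1 := by
  simp only [maxAppendable, Finset.le_min'_iff, Finset.forall_mem_insert,
    Finset.forall_mem_image, Finset.mem_filter, Finset.mem_range, IsInversion]
  constructor
  · rintro ⟨hM, h⟩
    exact ⟨hM, fun i j ⟨hij, hj, hlt⟩ => h ⟨hj, i, hij, hlt⟩⟩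
  · rintro ⟨hM, h⟩
    exact ⟨hM, fun j ⟨hj, i, hij, hlt⟩ => h i j ⟨hij, hj, hlt⟩⟩

lemma one_le_maxAppendable (s : List ℕ) : 1 ≤ maxAppendable s :=
  le_maxAppendable_iff.2 ⟨by omega, fun _ _ _ => by omega⟩

lemma maxAppendable_le_of_isInversion {s : List ℕ} {i j : ℕ} (h : IsInversion s i j) :
    maxAppendable s ≤ s.getD j 0 + 1 :=
  (le_maxAppendable_iff.1 le_rfl).2 i j h

lemma maxAppendable_of_pairwise {s : List ℕ} (hs : s.Pairwise (· ≤ ·)) :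
    maxAppendable s = listMax s + 1 := by
  refine eq_of_forall_le_iff fun w => ?_
  rw [le_maxAppendable_iff]
  simp [pairwise_le_iff_forall_not_isInversion.1 hs]

lemma maxAppendable_le_listMax {s : List ℕ} (hs : ¬ s.Pairwise (· ≤ ·)) :
    maxAppendable s ≤ listMax s := by
  obtain ⟨i, j, hij⟩ := exists_isInversion hs
  have := getD_le_listMax s i
  have := maxAppendable_le_of_isInversion hij
  have := hij.2.2
  omega

lemma maxAppendable_append_of_lt {s : List ℕ} {v : ℕ} (hv : v < maxAppendable s) :
    maxAppendable (s ++ [v]) = v + 1 := by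
  have hb := le_maxAppendable_iff.1 (le_refl (maxAppendable s))
  refine eq_of_forall_le_iff fun w => ?_
  simp only [le_maxAppendable_iff, listMax_append_singleton, isInversion_append_singleton_iff]
  constructor
  · rintro ⟨hM, h⟩
    rcases lt_or_ge v (listMax s) with hvM | hvM
    · have hs : s ≠ [] := by rintro rfl; simp [listMax] at hvM
      obtain ⟨k, hk, hke⟩ := exists_getD_eq_listMax hs
      simpa [getD_append_singleton_self] using h k s.length (Or.inr ⟨rfl, hk, hke ▸ hvM⟩)
    · omega
  · intro hw
    refine ⟨by omega, ?_⟩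
    rintro i j (hij | ⟨rfl, -, -⟩)
    · rw [List.getD_append _ _ _ _ hij.2.1]
      have := hb.2 i j hij
      omega
    · rw [getD_append_singleton_self]
      exact hw

lemma maxAppendable_append_maxAppendable (s : List ℕ) :
    maxAppendable (s ++ [maxAppendable s]) =
      maxAppendable s + if s.Pairwise (· ≤ ·) then 1 else 0 := by
  split_ifs with hs
  · have hsorted : (s ++ [maxAppendable s]).Pairwise (· ≤ ·) :=
      pairwise_append_singleton_iff.2 ⟨hs, by rw [maxAppendable_of_pairwise hs]; omega⟩
    rw [maxAppendable_of_pairwise hsorted, listMax_append_singleton, maxAppendable_of_pairwise hs]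
    omega
  · have hbM := maxAppendable_le_listMax hs
    refine eq_of_forall_le_iff fun w => ?_
    simp only [le_maxAppendable_iff (s := s ++ _), listMax_append_singleton,
      isInversion_append_singleton_iff, add_zero]
    constructor
    · rintro ⟨hM, h⟩
      refine le_maxAppendable_iff.2 ⟨by omega, fun i j hij => ?_⟩
      have := h i j (Or.inl hij)
      rwa [List.getD_append _ _ _ _ hij.2.1] at this
    · intro hw
      have hb := le_maxAppendable_iff.1 hw
      refine ⟨by omega, ?_⟩
      rintro i j (hij | ⟨rfl, -, -⟩)
      · rw [List.getD_append _ _ _ _ hij.2.1]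
        exact hb.2 i j hij
      · rw [getD_append_singleton_self]
        omega

theorem IsAscentSeq102Free.append_singleton_iff {s : List ℕ} (h : IsAscentSeq102Free s)
    (hs : s ≠ []) (v : ℕ) : IsAscentSeq102Free (s ++ [v]) ↔ v ≤ maxAppendable s := by
  constructor
  · intro hv
    refine le_maxAppendable_iff.2 ⟨hv.le_listMax_add_one_of_append hs, fun i j hij => ?_⟩
    obtain ⟨k, hkj, hk⟩ := h.exists_getD_eq_succ_of_isInversion hij
    have hkj' : IsInversion s k j := ⟨hkj, hij.2.1, by omega⟩
    by_contra hlt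
    exact hv.2 (contains102_append_singleton_iff.2 (Or.inr ⟨k, j, hkj', by omega⟩))
  · intro hv
    refine ⟨(isAscentSeq_append_singleton_iff hs v).2 ⟨h.1, ?_⟩, ?_⟩
    · by_cases hsorted : s.Pairwise (· ≤ ·)
      · rw [h.1.asc_eq_listMax hsorted, ← maxAppendable_of_pairwise hsorted]
        omega
      · have := maxAppendable_le_listMax hsorted
        have := h.1.listMax_le
        omega
    · rw [contains102_append_singleton_iff]
      rintro (hc | ⟨i, j, hij, hlt⟩)
      · exact h.2 hc
      · have := maxAppendable_le_of_isInversion hij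
        have := hij.2.2
        omega

def avoiders : ℕ → Finset (List ℕ)
  | 0 => {[0]}
  | n + 1 => ((avoiders n).sigma fun s => Finset.range (maxAppendable s + 1)).image
      fun p => p.1 ++ [p.2]

lemma isAscentSeq102Free_singleton_zero : IsAscentSeq102Free [0] :=
  ⟨⟨fun _ => rfl, fun i hi hi' => by simp at hi'; omega⟩,
    fun ⟨_, _, c, hab, hbc, hc, _⟩ => by simp at hc; omega⟩

lemma mem_avoiders {n : ℕ} {s : List ℕ} :
    s ∈ avoiders n ↔ s.length = n + 1 ∧ IsAscentSeq102Free s := by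
  induction n generalizing s with
  | zero =>
    simp only [avoiders, Finset.mem_singleton, zero_add, List.length_eq_one_iff]
    constructor
    · rintro rfl
      exact ⟨⟨0, rfl⟩, isAscentSeq102Free_singleton_zero⟩
    · rintro ⟨⟨a, rfl⟩, h⟩
      simpa using h.1.1 (by simp)
  | succ n ih =>
    simp only [avoiders, Finset.mem_image, Finset.mem_sigma, Finset.mem_range, Sigma.exists,
      Nat.lt_succ_iff]
    constructor
    · rintro ⟨t, v, ⟨ht, hv⟩, rfl⟩
      obtain ⟨hlen, hgood⟩ := ih.1 ht
      have hne : t ≠ [] := List.ne_nil_of_length_pos (by omega)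
      exact ⟨by simp [hlen], (hgood.append_singleton_iff hne v).2 hv⟩
    · rintro ⟨hlen, hgood⟩
      obtain ⟨t, v, rfl⟩ :=
        (List.eq_nil_or_concat' s).resolve_left (by rintro rfl; simp at hlen)
      have htlen : t.length = n + 1 := by simpa using hlen
      have hne : t ≠ [] := List.ne_nil_of_length_pos (by omega)
      have ht : IsAscentSeq102Free t := hgood.of_append
      exact ⟨t, v, ⟨ih.2 ⟨htlen, ht⟩, (ht.append_singleton_iff hne v).1 hgood⟩, rfl⟩

lemma sum_avoiders_succ {M : Type*} [AddCommMonoid M] (n : ℕ) (f : List ℕ → M) :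
    ∑ s ∈ avoiders (n + 1), f s =
      ∑ s ∈ avoiders n, ∑ v ∈ Finset.range (maxAppendable s + 1), f (s ++ [v]) := by
  rw [avoiders, Finset.sum_image, Finset.sum_sigma]
  rintro ⟨s, v⟩ - ⟨t, w⟩ - h
  obtain ⟨rfl, hvw⟩ := List.append_inj' h rfl
  cases hvw
  rfl

open Polynomial

lemma sum_X_pow_maxAppendable_append (s : List ℕ) :
    ∑ v ∈ Finset.range (maxAppendable s + 1), (X : ℤ[X]) ^ maxAppendable (s ++ [v]) =
      ∑ c ∈ Finset.range (maxAppendable s), X ^ (c + 1) +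
        X ^ (maxAppendable s + if s.Pairwise (· ≤ ·) then 1 else 0) := by
  rw [Finset.sum_range_succ, maxAppendable_append_maxAppendable]
  congr 1
  refine Finset.sum_congr rfl fun v hv => ?_
  rw [maxAppendable_append_of_lt (Finset.mem_range.1 hv)]

lemma mul_sum_X_pow_maxAppendable_append (s : List ℕ) :
    (X - 1) * ∑ v ∈ Finset.range (maxAppendable s + 1), (X : ℤ[X]) ^ maxAppendable (s ++ [v]) =
      X * (X ^ maxAppendable s - 1) + (X - 1) * (X ^ maxAppendable s +
        (X - 1) * if s.Pairwise (· ≤ ·) then X ^ maxAppendable s else 0) := by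
  have hgeom : ∑ c ∈ Finset.range (maxAppendable s), (X : ℤ[X]) ^ (c + 1) * (X - 1) =
      X * (X ^ maxAppendable s - 1) := by
    simp_rw [pow_succ', mul_assoc, ← Finset.mul_sum, ← Finset.sum_mul, geom_sum_mul]
  rw [sum_X_pow_maxAppendable_append, mul_add, mul_comm, Finset.sum_mul, hgeom]
  split_ifs <;> ring

lemma sum_sorted_X_pow_maxAppendable_append (s : List ℕ) :
    ∑ v ∈ Finset.range (maxAppendable s + 1),
        (if (s ++ [v]).Pairwise (· ≤ ·) then (X : ℤ[X]) ^ maxAppendable (s ++ [v]) else 0) =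
      if s.Pairwise (· ≤ ·) then X ^ maxAppendable s + X ^ (maxAppendable s + 1) else 0 := by
  split_ifs with hs
  · have hb := maxAppendable_of_pairwise hs
    rw [hb, Finset.sum_range_succ, Finset.sum_range_succ, Finset.sum_eq_zero]
    · have hM : listMax s < maxAppendable s := by omega
      have hlast := maxAppendable_append_maxAppendable s
      rw [if_pos hs, hb] at hlast
      rw [if_pos (pairwise_append_singleton_iff.2 ⟨hs, le_rfl⟩),
        if_pos (pairwise_append_singleton_iff.2 ⟨hs, by omega⟩),
        maxAppendable_append_of_lt hM, hlast, zero_add]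
    · intro v hv
      refine if_neg fun h => ?_
      have := (pairwise_append_singleton_iff.1 h).2
      simp at hv
      omega
  · refine Finset.sum_eq_zero fun v _ => if_neg fun h => hs ?_
    exact (pairwise_append_singleton_iff.1 h).1

noncomputable def boundPoly (n : ℕ) : ℤ[X] :=
  ∑ s ∈ avoiders n, X ^ maxAppendable s

noncomputable def sortedBoundPoly (n : ℕ) : ℤ[X] :=
  ∑ s ∈ avoiders n, if s.Pairwise (· ≤ ·) then X ^ maxAppendable s else 0

lemma boundPoly_zero : boundPoly 0 = X := by
  simp [boundPoly, avoiders, maxAppendable_of_pairwise, listMax]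

lemma sortedBoundPoly_eq (n : ℕ) : sortedBoundPoly n = X * (X + 1) ^ n := by
  induction n with
  | zero => simp [sortedBoundPoly, avoiders, maxAppendable_of_pairwise, listMax]
  | succ n ih =>
    rw [sortedBoundPoly, sum_avoiders_succ]
    simp_rw [sum_sorted_X_pow_maxAppendable_append]
    calc _ = ∑ s ∈ avoiders n,
          (X + 1) * if s.Pairwise (· ≤ ·) then (X : ℤ[X]) ^ maxAppendable s else 0 :=
          Finset.sum_congr rfl fun s _ => by split_ifs <;> ring
      _ = X * (X + 1) ^ (n + 1) := by rw [← Finset.mul_sum, ← sortedBoundPoly, ih]; ring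

lemma mul_boundPoly_succ (n : ℕ) :
    (X - 1) * boundPoly (n + 1) = X * (boundPoly n - ((avoiders n).card : ℤ[X])) +
      (X - 1) * (boundPoly n + (X - 1) * sortedBoundPoly n) := by
  rw [boundPoly, sum_avoiders_succ, Finset.mul_sum]
  simp_rw [mul_sum_X_pow_maxAppendable_append]
  rw [boundPoly, sortedBoundPoly, Finset.card_eq_sum_ones, Nat.cast_sum, Nat.cast_one,
    ← Finset.sum_sub_distrib]
  simp only [Finset.mul_sum, ← Finset.sum_add_distrib]

lemma eval_one_boundPoly (n : ℕ) : (boundPoly n).eval 1 = (avoiders n).card := by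
  simp [boundPoly, eval_finsetSum]

lemma eval_zero_boundPoly (n : ℕ) : (boundPoly n).eval 0 = 0 := by
  simp only [boundPoly, eval_finsetSum, eval_pow, eval_X]
  exact Finset.sum_eq_zero fun s _ => zero_pow (Nat.one_le_iff_ne_zero.1 (one_le_maxAppendable s))

lemma exists_boundPoly_eq (n : ℕ) : ∃ c : ℤ,
    (X - 2) * boundPoly n = (X - 1) ^ 2 * (X + 1) ^ n - 3 ^ n * (X - 1) + (X - 2) * C c := by
  induction n with
  | zero => exact ⟨1, by rw [boundPoly_zero, C_1]; ring⟩
  | succ n ih =>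
    obtain ⟨c, hc⟩ := ih
    have hcard : ((avoiders n).card : ℤ[X]) = C c := by
      have := congrArg (eval 1) hc
      simp [eval_one_boundPoly] at this
      rw [← this, map_natCast]
    have hX : (X - 1 : ℤ[X]) ≠ 0 := by simpa using X_sub_C_ne_zero (1 : ℤ)
    refine ⟨c + 3 ^ n, mul_left_cancel₀ hX ?_⟩
    have hsucc := mul_boundPoly_succ n
    rw [hcard, sortedBoundPoly_eq] at hsucc
    rw [C_add, C_pow, C_ofNat]
    linear_combination (X - 2) * hsucc + (2 * X - 1) * hc

theorem two_mul_card_avoiders (n : ℕ) : 2 * (avoiders n).card = 3 ^ n + 1 := by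
  obtain ⟨c, hc⟩ := exists_boundPoly_eq n
  have h1 := congrArg (eval 1) hc
  have h0 := congrArg (eval 0) hc
  simp [eval_one_boundPoly, eval_zero_boundPoly] at h1 h0
  zify
  linarith

/-- The number of 102-avoiding ascent sequences of length `n` is
`(3^(n-1)+1)/2` (stated as: twice the count is `3^(n-1) + 1`). -/
theorem stmt14 (n : ℕ) (hn : 1 ≤ n) :
    2 * {s : List ℕ | s.length = n ∧ IsAscentSeq s ∧ ¬ Contains102 s}.ncard =
      3 ^ (n - 1) + 1 := by
  obtain ⟨m, rfl⟩ : ∃ m, n = m + 1 := ⟨n - 1, by omega⟩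
  have hset : {s : List ℕ | s.length = m + 1 ∧ IsAscentSeq s ∧ ¬ Contains102 s} =
      ↑(avoiders m) := by
    ext s
    simp [mem_avoiders, IsAscentSeq102Free]
  rw [hset, Set.ncard_coe_finset, Nat.add_sub_cancel, two_mul_card_avoiders]
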